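/- Let K be a field, let e < n, and let F = Σ_{i=1}^{e-1} F_i Q_{i,i+1} + Σ_{j=e+1}^{n} G_j x_j where Q_{i,j} = x_i x_{j-1} − x_{i-1} x_j, the F_i, G_j are homogeneous of the appropriate degrees, F_1 = x_0^{d-2} and G_n = x_e^{d-1} with d ≥ 2. Then V(F) is smooth at every point of the rational normal curve C = {(s^e : … : t^e : 0 : ⋯ : 0)}: for (s,t) ≠ (0,0), the gradient of F at the corresponding point of C is nonzero. -/

import Mathlib

/-!
Every quadric `Q_{i,i+1}` and every coordinate `x_j` with `j > e` vanishes on `C`, so at a point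
of `C` the gradient of `F` only sees `Σ F_i ∇Q_{i,i+1} + Σ G_j ∇x_j`. If `t ≠ 0`, the
`x_n`-derivative is `G_n = x_e^{d-1} = t^{e(d-1)}`. If `t = 0`, the point is `(s^e : 0 : ⋯ : 0)`
and the only surviving contribution to the `x_2`-derivative is `F_1 ∂Q_{1,2}/∂x_2 = -x_0 F_1`,
which there is `-s^e (s^e)^{d-2} ≠ 0`.
-/

open MvPolynomial
open Fin.NatCast

/-- The hypersurface `F = Σ_{i=1}^{e-1} F_i Q_{i,i+1} + Σ_{j=e+1}^{n} G_j x_j`,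
with `Q_{i,i+1} = x_i x_i − x_{i-1} x_{i+1}`. -/
noncomputable def stmt14F (K : Type*) [Field K] (n e : ℕ)
    (Fc G : ℕ → MvPolynomial (Fin (n + 1)) K) : MvPolynomial (Fin (n + 1)) K :=
  (∑ i ∈ Finset.Icc 1 (e - 1),
      Fc i * (X (i : Fin (n + 1)) * X (i : Fin (n + 1))
        - X ((i - 1 : ℕ) : Fin (n + 1)) * X ((i + 1 : ℕ) : Fin (n + 1))))
    + ∑ j ∈ Finset.Icc (e + 1) n, G j * X (j : Fin (n + 1))

open Finset

theorem Fin.natCast_ne_natCast {n a b : ℕ} (ha : a ≤ n) (hb : b ≤ n) (hab : a ≠ b) :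
    (a : Fin (n + 1)) ≠ b := fun h =>
  hab <| le_antisymm ((Fin.natCast_le_natCast ha hb).1 h.le) ((Fin.natCast_le_natCast hb ha).1 h.ge)

namespace MvPolynomial

theorem eval_pderiv_mul_of_eval_eq_zero {σ R : Type*} [CommSemiring R] {p : σ → R}
    {f q : MvPolynomial σ R} (k : σ) (hq : eval p q = 0) :
    eval p (pderiv k (f * q)) = eval p f * eval p (pderiv k q) := by
  rw [pderiv_mul, map_add, map_mul, map_mul, hq, mul_zero, zero_add]

section Coordinates

variable {R : Type*} [CommRing R] {n : ℕ}

theorem pderiv_X_natCast_of_ne {a b : ℕ} (ha : a ≤ n) (hb : b ≤ n) (hab : b ≠ a) :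
    pderiv (a : Fin (n + 1)) (X (b : Fin (n + 1)) : MvPolynomial (Fin (n + 1)) R) = 0 :=
  pderiv_X_of_ne (Fin.natCast_ne_natCast hb ha hab)

theorem eval_single_zero_X_natCast (c : R) {m : ℕ} (h1 : 1 ≤ m) (hm : m ≤ n) :
    eval (Pi.single 0 c) (X (m : Fin (n + 1)) : MvPolynomial (Fin (n + 1)) R) = 0 := by
  have hm0 : (m : Fin (n + 1)) ≠ 0 := by
    simpa using Fin.natCast_ne_natCast hm (Nat.zero_le n) (by omega)
  rw [eval_X, Pi.single_eq_of_ne hm0]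

noncomputable def quadric (R : Type*) [CommRing R] (n i : ℕ) : MvPolynomial (Fin (n + 1)) R :=
  X (i : Fin (n + 1)) * X (i : Fin (n + 1))
    - X ((i - 1 : ℕ) : Fin (n + 1)) * X ((i + 1 : ℕ) : Fin (n + 1))

theorem pderiv_quadric_of_lt {i k : ℕ} (hik : i + 1 < k) (hk : k ≤ n) :
    pderiv (k : Fin (n + 1)) (quadric R n i) = 0 := by
  simp only [quadric, map_sub, pderiv_mul,
    pderiv_X_natCast_of_ne hk (by omega : i ≤ n) (by omega),
    pderiv_X_natCast_of_ne hk (by omega : i - 1 ≤ n) (by omega),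
    pderiv_X_natCast_of_ne hk (by omega : i + 1 ≤ n) (by omega)]
  ring

theorem eval_single_zero_pderiv_quadric (c : R) {i : ℕ} (hi : 2 ≤ i) (hin : i + 1 ≤ n)
    (k : Fin (n + 1)) : eval (Pi.single 0 c) (pderiv k (quadric R n i)) = 0 := by
  simp only [quadric, map_sub, pderiv_mul, map_add, map_mul,
    eval_single_zero_X_natCast (n := n) (m := i) c (by omega) (by omega),
    eval_single_zero_X_natCast (n := n) (m := i - 1) c (by omega) (by omega),
    eval_single_zero_X_natCast (n := n) (m := i + 1) c (by omega) hin]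
  ring

theorem eval_single_zero_pderiv_two_quadric_one (c : R) (hn : 2 ≤ n) :
    eval (Pi.single 0 c) (pderiv ((2 : ℕ) : Fin (n + 1)) (quadric R n 1)) = -c := by
  have h21 : pderiv ((2 : ℕ) : Fin (n + 1)) (X ((1 : ℕ) : Fin (n + 1)) : MvPolynomial _ R) =
      0 := pderiv_X_natCast_of_ne hn (by omega) (by omega)
  simp only [quadric, Nat.sub_self, Nat.reduceAdd, map_sub, pderiv_mul, h21, pderiv_X_self,
    map_add, map_mul, eval_single_zero_X_natCast (n := n) (m := 1) c le_rfl (by omega),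
    eval_single_zero_X_natCast (n := n) (m := 2) c (by omega) hn, eval_X, Fin.natCast_zero,
    Pi.single_eq_same, map_one, map_zero]
  ring

end Coordinates

end MvPolynomial

section RationalNormalCurve

variable {R : Type*} [CommSemiring R] {n e : ℕ}

def rationalNormalCurve (n e : ℕ) (s t : R) : Fin (n + 1) → R :=
  fun m => if (m : ℕ) ≤ e then s ^ (e - (m : ℕ)) * t ^ (m : ℕ) else 0

theorem rationalNormalCurve_natCast_of_le (s t : R) {i : ℕ} (hin : i ≤ n) (hie : i ≤ e) :
    rationalNormalCurve n e s t i = s ^ (e - i) * t ^ i := by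
  simp [rationalNormalCurve, Fin.val_cast_of_lt (Nat.lt_succ_of_le hin), hie]

theorem rationalNormalCurve_natCast_of_lt (s t : R) {j : ℕ} (hej : e < j) (hjn : j ≤ n) :
    rationalNormalCurve n e s t j = 0 := by
  simp [rationalNormalCurve, Fin.val_cast_of_lt (Nat.lt_succ_of_le hjn), hej]

theorem rationalNormalCurve_zero_right (s : R) :
    rationalNormalCurve n e s 0 = Pi.single 0 (s ^ e) := by
  ext m
  rcases eq_or_ne m 0 with rfl | hm
  · simp [rationalNormalCurve]
  · have : (m : ℕ) ≠ 0 := Fin.val_ne_zero_iff.mpr hm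
    simp [rationalNormalCurve, Pi.single_eq_of_ne hm, this]

end RationalNormalCurve

theorem eval_quadric_rationalNormalCurve {R : Type*} [CommRing R] {n e : ℕ} (s t : R) {i : ℕ}
    (hi : 1 ≤ i) (hie : i < e) (hen : e ≤ n) :
    eval (rationalNormalCurve n e s t) (quadric R n i) = 0 := by
  obtain ⟨a, rfl⟩ : ∃ a, e = i + 1 + a := ⟨e - (i + 1), by omega⟩
  obtain ⟨b, rfl⟩ : ∃ b, i = b + 1 := ⟨i - 1, by omega⟩
  simp only [quadric, map_sub, map_mul, eval_X, Nat.add_sub_cancel]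
  rw [rationalNormalCurve_natCast_of_le s t (by omega) (by omega),
    rationalNormalCurve_natCast_of_le s t (i := b) (by omega) (by omega),
    rationalNormalCurve_natCast_of_le s t (i := b + 1 + 1) (by omega) (by omega),
    show b + 1 + 1 + a - (b + 1) = a + 1 by omega, show b + 1 + 1 + a - b = a + 2 by omega,
    show b + 1 + 1 + a - (b + 1 + 1) = a by omega]
  ring

section Gradient

variable {K : Type*} [Field K] {n e : ℕ} (Fc G : ℕ → MvPolynomial (Fin (n + 1)) K) (s t : K)

theorem stmt14F_eq_sum_quadric :
    stmt14F K n e Fc G = ∑ i ∈ Icc 1 (e - 1), Fc i * quadric K n i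
      + ∑ j ∈ Icc (e + 1) n, G j * X (j : Fin (n + 1)) :=
  rfl

theorem eval_pderiv_stmt14F_rationalNormalCurve (hen : e < n) (k : Fin (n + 1)) :
    eval (rationalNormalCurve n e s t) (pderiv k (stmt14F K n e Fc G)) =
      ∑ i ∈ Icc 1 (e - 1), eval (rationalNormalCurve n e s t) (Fc i)
          * eval (rationalNormalCurve n e s t) (pderiv k (quadric K n i))
        + ∑ j ∈ Icc (e + 1) n, eval (rationalNormalCurve n e s t) (G j)
          * eval (rationalNormalCurve n e s t) (pderiv k (X (j : Fin (n + 1)))) := by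
  rw [stmt14F_eq_sum_quadric Fc G, map_add, map_add, map_sum, map_sum, map_sum, map_sum]
  congr 1 <;> refine sum_congr rfl fun i hi => eval_pderiv_mul_of_eval_eq_zero k ?_ <;>
    rw [mem_Icc] at hi
  · exact eval_quadric_rationalNormalCurve s t hi.1 (by omega) hen.le
  · rw [eval_X, rationalNormalCurve_natCast_of_lt s t (by omega) hi.2]

theorem eval_pderiv_last_stmt14F_rationalNormalCurve (hen : e < n) :
    eval (rationalNormalCurve n e s t) (pderiv (n : Fin (n + 1)) (stmt14F K n e Fc G)) =
      eval (rationalNormalCurve n e s t) (G n) := by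
  rw [eval_pderiv_stmt14F_rationalNormalCurve Fc G s t hen, sum_eq_zero, zero_add,
    sum_eq_single_of_mem n (mem_Icc.mpr ⟨hen, le_rfl⟩), pderiv_X_self, map_one, mul_one]
  · intro j hj hjn
    rw [pderiv_X_natCast_of_ne le_rfl (mem_Icc.mp hj).2 hjn, map_zero, mul_zero]
  · intro i hi
    have := mem_Icc.mp hi
    rw [pderiv_quadric_of_lt (i := i) (by omega) le_rfl, map_zero, mul_zero]

theorem eval_pderiv_two_stmt14F_rationalNormalCurve_zero_right (he : 2 ≤ e) (hen : e < n) :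
    eval (rationalNormalCurve n e s 0) (pderiv ((2 : ℕ) : Fin (n + 1)) (stmt14F K n e Fc G)) =
      -(s ^ e * eval (rationalNormalCurve n e s 0) (Fc 1)) := by
  rw [eval_pderiv_stmt14F_rationalNormalCurve Fc G s 0 hen, sum_eq_zero (s := Icc (e + 1) n),
    add_zero, sum_eq_single_of_mem 1 (mem_Icc.mpr ⟨le_rfl, by omega⟩),
    rationalNormalCurve_zero_right, eval_single_zero_pderiv_two_quadric_one _ (by omega),
    mul_neg, mul_comm]
  · intro i hi hi1
    have := mem_Icc.mp hi
    rw [rationalNormalCurve_zero_right,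
      eval_single_zero_pderiv_quadric _ (by omega) (by omega), mul_zero]
  · intro j hj
    have := mem_Icc.mp hj
    rw [pderiv_X_natCast_of_ne (by omega) this.2 (by omega), map_zero, mul_zero]

end Gradient

theorem stmt_14_general (K : Type*) [Field K] (n e d : ℕ) (he : 2 ≤ e) (hen : e < n)
    (Fc G : ℕ → MvPolynomial (Fin (n + 1)) K)
    (hF1 : Fc 1 = X ((0 : ℕ) : Fin (n + 1)) ^ (d - 2))
    (hGn : G n = X ((e : ℕ) : Fin (n + 1)) ^ (d - 1))
    (s t : K) (hst : ¬(s = 0 ∧ t = 0)) :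
    ∃ k : Fin (n + 1),
      eval (fun m : Fin (n + 1) =>
          if (m : ℕ) ≤ e then s ^ (e - (m : ℕ)) * t ^ (m : ℕ) else 0)
        (pderiv k (stmt14F K n e Fc G)) ≠ 0 := by
  by_cases ht : t = 0
  · have hs : s ≠ 0 := fun hs => hst ⟨hs, ht⟩
    subst ht
    refine ⟨(2 : ℕ), ?_⟩
    change eval (rationalNormalCurve n e s 0) _ ≠ 0
    rw [eval_pderiv_two_stmt14F_rationalNormalCurve_zero_right Fc G s he hen, hF1,
      rationalNormalCurve_zero_right]
    simp [hs]
  · refine ⟨n, ?_⟩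
    change eval (rationalNormalCurve n e s t) _ ≠ 0
    rw [eval_pderiv_last_stmt14F_rationalNormalCurve Fc G s t hen, hGn, map_pow, eval_X,
      rationalNormalCurve_natCast_of_le s t hen.le le_rfl]
    simp [ht]

/-- for `F = Σ F_i Q_{i,i+1} + Σ G_j x_j` with `F_1 = x_0^{d-2}`,
`G_n = x_e^{d-1}` and homogeneous `F_i`, `G_j`, the hypersurface `V(F)` is smooth
at every point of the degree-`e` rational normal curve `(s^e : ⋯ : t^e : 0 : ⋯ : 0)`. -/
theorem stmt_14 (K : Type*) [Field K] (n e d : ℕ) (he : 2 ≤ e) (hen : e < n)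
    (hd : 2 ≤ d) (Fc G : ℕ → MvPolynomial (Fin (n + 1)) K)
    (hF1 : Fc 1 = X ((0 : ℕ) : Fin (n + 1)) ^ (d - 2))
    (hGn : G n = X ((e : ℕ) : Fin (n + 1)) ^ (d - 1))
    (hFhom : ∀ i, (Fc i).IsHomogeneous (d - 2))
    (hGhom : ∀ j, (G j).IsHomogeneous (d - 1))
    (s t : K) (hst : ¬(s = 0 ∧ t = 0)) :
    ∃ k : Fin (n + 1),
      eval (fun m : Fin (n + 1) =>
          if (m : ℕ) ≤ e then s ^ (e - (m : ℕ)) * t ^ (m : ℕ) else 0)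
        (pderiv k (stmt14F K n e Fc G)) ≠ 0 :=
  stmt_14_general K n e d he hen Fc G hF1 hGn s t hst
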